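/- arXiv:1411.0750 — 6 statements merged into one kernel-verified Lean document; each statement's English description precedes it below -/
import Mathlib

section
/- Let p be a prime and a, b positive integers. Then p divides the binomial coefficient C(a,k) for every k with 1 ≤ k ≤ b if and only if ν_p(a) ≥ ℓ_p(b), where ν_p(a) = max{i : p^i divides a} and ℓ_p(b) = min{i : p^i > b}. -/
/-!
Write `v = ν_p(a)`; both sides are equivalent to `b < p ^ v`.
If `b < p ^ v` and `1 ≤ k ≤ b`, then `p ^ v ∤ k`, while `a ∣ C(a,k) * k`, so `p ∣ C(a,k)`.
Conversely `k = p ^ v` is a witness when `p ^ v ≤ b`: by Lucas' theorem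
`C(p ^ v * u, p ^ v) ≡ u [MOD p]`, and `u = a / p ^ v` is prime to `p`.
-/

namespace Nat

variable {p : ℕ}

theorem sInf_lt_pow_le_iff (hp : 1 < p) (b v : ℕ) :
    sInf {i | b < p ^ i} ≤ v ↔ b < p ^ v := by
  refine ⟨fun h => ?_, fun h => Nat.sInf_le h⟩
  have hmem : b < p ^ sInf {i | b < p ^ i} :=
    Nat.sInf_mem (s := {i | b < p ^ i}) ⟨b, Nat.lt_pow_self hp⟩
  exact hmem.trans_le (Nat.pow_le_pow_right (by omega) h)

theorem dvd_choose_mul (n k : ℕ) : n ∣ n.choose k * k := by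
  rcases n with _ | m <;> rcases k with _ | j
  · simp
  · simp
  · simp
  · exact Dvd.intro _ (add_one_mul_choose_eq m j)

theorem Prime.pow_padicValNat_dvd_of_not_dvd_choose (hp : p.Prime) {n k : ℕ}
    (h : ¬ p ∣ n.choose k) : p ^ padicValNat p n ∣ k :=
  ((hp.coprime_iff_not_dvd.2 h).pow_left _).dvd_of_dvd_mul_left
    (pow_padicValNat_dvd.trans (dvd_choose_mul n k))

theorem Prime.choose_pow_mul_modEq (hp : p.Prime) (v u : ℕ) :
    (p ^ v * u).choose (p ^ v) ≡ u [MOD p] := by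
  have := Fact.mk hp
  induction v with
  | zero => simp [Nat.ModEq]
  | succ v ih =>
    have hdvd : p ∣ p ^ (v + 1) := dvd_pow_self p v.succ_ne_zero
    have hdiv : p ^ (v + 1) / p = p ^ v := by rw [pow_succ, Nat.mul_div_cancel _ hp.pos]
    have hdiv' : p ^ (v + 1) * u / p = p ^ v * u := by
      rw [mul_comm, Nat.mul_div_assoc _ hdvd, hdiv, mul_comm]
    have lucas := Choose.choose_modEq_choose_mod_mul_choose_div_nat
      (n := p ^ (v + 1) * u) (k := p ^ (v + 1)) (p := p)
    rw [Nat.mod_eq_zero_of_dvd (hdvd.mul_right u), Nat.mod_eq_zero_of_dvd hdvd, hdiv, hdiv',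
      choose_self, one_mul] at lucas
    exact lucas.trans ih

theorem Prime.not_dvd_choose_pow_padicValNat (hp : p.Prime) {a : ℕ} (ha : a ≠ 0) :
    ¬ p ∣ a.choose (p ^ padicValNat p a) := by
  have := Fact.mk hp
  have hpow : p ^ padicValNat p a ∣ a := pow_padicValNat_dvd
  have hcompl : ¬ p ∣ a / p ^ padicValNat p a := fun h =>
    pow_succ_padicValNat_not_dvd ha (pow_succ p _ ▸ Nat.mul_dvd_of_dvd_div hpow h)
  have lucas := hp.choose_pow_mul_modEq (padicValNat p a) (a / p ^ padicValNat p a)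
  rw [Nat.mul_div_cancel' hpow] at lucas
  rwa [← lucas.dvd_iff dvd_rfl] at hcompl

end Nat

theorem binom_divisibility_criterion_general (p a b : ℕ) (hp : p.Prime) (ha : 0 < a) :
    (∀ k : ℕ, 1 ≤ k → k ≤ b → p ∣ a.choose k) ↔
      sInf {i : ℕ | b < p ^ i} ≤ padicValNat p a := by
  rw [Nat.sInf_lt_pow_le_iff hp.one_lt]
  constructor
  · intro h
    by_contra! hle
    exact hp.not_dvd_choose_pow_padicValNat ha.ne' (h _ (Nat.one_le_pow _ _ hp.pos) hle)
  · intro hlt k hk hkb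
    by_contra hndvd
    have := Nat.le_of_dvd hk (hp.pow_padicValNat_dvd_of_not_dvd_choose hndvd)
    omega

/-- James' criterion: `p` divides `C(a,k)` for all `1 ≤ k ≤ b` iff `ν_p(a) ≥ ℓ_p(b)`,
where `ν_p` is the `p`-adic valuation and `ℓ_p(b) = min {i : p^i > b}`. -/
theorem binom_divisibility_criterion (p a b : ℕ) (hp : p.Prime) (ha : 0 < a) (hb : 0 < b) :
    (∀ k : ℕ, 1 ≤ k → k ≤ b → p ∣ a.choose k) ↔
      sInf {i : ℕ | b < p ^ i} ≤ padicValNat p a :=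
  binom_divisibility_criterion_general p a b hp ha
end

section
/- Let p be a prime and a_1 ≥ a_2 ≥ ... ≥ a_N be positive integers. Define the Garnir content Gc(a_1,...,a_N) as the greatest common divisor of the set {C(a_i, k) : 1 ≤ i ≤ N-1, 1 ≤ k ≤ a_{i+1} - 1} (with gcd of the empty set equal to 0). Then p divides Gc(a_1,...,a_N) if and only if ν_p(a_i) ≥ ℓ_p(a_{i+1} - 1) for all 1 ≤ i ≤ N-1, where ℓ_p(0) is interpreted so that the condition holds vacuously when a_{i+1} = 1. -/
/-!
For a fixed `i`, `p` divides the Garnir content iff `p ∣ C(n, k)` for all `1 ≤ k ≤ m`, where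
`n = a_i` and `m = a_{i+1} - 1`. Write `n = p^ν c` with `p ∤ c`. By Lucas,
`C(p^ν c, p^ν) ≡ c ≢ 0 (mod p)`, so the condition forces `m < p^ν`. Conversely, for `0 < k < p^ν` the identity
`k C(n, k) = n C(n - 1, k - 1)` shows `p^ν ∣ k C(n, k)` while `p^ν ∤ k`, hence `p ∣ C(n, k)`.
Finally `m < p^ν` is exactly `ℓ_p(m) ≤ ν`.
-/

/-- The Garnir content of a sequence `a 0, a 1, ..., a (N-1)` (representing
`a_1 ≥ a_2 ≥ ... ≥ a_N`): the gcd of the binomial coefficients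
`C(a_i, k)` for `1 ≤ i ≤ N-1` and `1 ≤ k ≤ a_{i+1} - 1`, with `gcd ∅ = 0`. -/
def garnirContent (N : ℕ) (a : ℕ → ℕ) : ℕ :=
  (Finset.range (N - 1)).gcd fun i =>
    (Finset.Icc 1 (a (i + 1) - 1)).gcd fun k => (a i).choose k

theorem Nat.Prime.not_dvd_choose_pow_padicValNat_s1 {p n : ℕ} (hp : p.Prime) (hn : n ≠ 0) :
    ¬ p ∣ n.choose (p ^ padicValNat p n) := by
  have := Fact.mk hp
  have hlucas : n.choose (p ^ padicValNat p n) ≡ ordCompl[p] n [MOD p] := by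
    have := Choose.choose_pow_mul_pow_mul_modEq_choose_nat (p := p)
      (k := n.factorization p) (a := ordCompl[p] n) (b := 1)
    rw [mul_one, choose_one_right, ordProj_mul_ordCompl_eq_self] at this
    simpa only [factorization_def n hp] using this
  rw [hlucas.dvd_iff dvd_rfl]
  exact not_dvd_ordCompl hp hn

theorem Nat.Prime.dvd_choose_of_pow_dvd {p n k ℓ : ℕ} (hp : p.Prime) (hn : p ^ ℓ ∣ n)
    (hk₀ : 0 < k) (hk : k < p ^ ℓ) : p ∣ n.choose k := by
  obtain _ | n := n
  · rw [choose_eq_zero_of_lt hk₀]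
    exact dvd_zero p
  obtain ⟨k, rfl⟩ := Nat.exists_eq_add_one_of_ne_zero hk₀.ne'
  by_contra hp_not_dvd
  have hcop : Coprime (p ^ ℓ) ((n + 1).choose (k + 1)) :=
    ((hp.coprime_iff_not_dvd).2 hp_not_dvd).pow_left ℓ
  have : p ^ ℓ ∣ (n + 1).choose (k + 1) * (k + 1) :=
    add_one_mul_choose_eq n k ▸ hn.mul_right _
  exact hk.not_ge (Nat.le_of_dvd k.succ_pos (hcop.dvd_of_dvd_mul_left this))

theorem Nat.Prime.forall_dvd_choose_iff_lt_pow_padicValNat {p n : ℕ} (hp : p.Prime) (hn : n ≠ 0)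
    (m : ℕ) : (∀ k, 1 ≤ k → k ≤ m → p ∣ n.choose k) ↔ m < p ^ padicValNat p n := by
  refine ⟨fun h => ?_, fun h k hk₀ hkm => ?_⟩
  · by_contra! hle
    exact hp.not_dvd_choose_pow_padicValNat_s1 hn (h _ (Nat.one_le_pow _ _ hp.pos) hle)
  · exact hp.dvd_choose_of_pow_dvd pow_padicValNat_dvd hk₀ (hkm.trans_lt h)

theorem Nat.sInf_setOf_lt_pow_le_iff {p m ν : ℕ} (hp : 1 < p) :
    sInf {j : ℕ | m < p ^ j} ≤ ν ↔ m < p ^ ν := by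
  refine ⟨fun h => ?_, fun h => Nat.sInf_le h⟩
  have hmem : m < p ^ sInf {j : ℕ | m < p ^ j} :=
    Nat.sInf_mem (s := {j | m < p ^ j}) ⟨m, Nat.lt_pow_self hp⟩
  exact hmem.trans_le (Nat.pow_le_pow_right (by omega) h)

theorem prime_dvd_garnirContent_iff_general (p N : ℕ) (hp : p.Prime)
    (a : ℕ → ℕ) (hpos : ∀ i, i < N → 0 < a i) :
    p ∣ garnirContent N a ↔
      ∀ i, i + 1 < N →
        sInf {j : ℕ | a (i + 1) - 1 < p ^ j} ≤ padicValNat p (a i) := by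
  simp only [garnirContent, Finset.dvd_gcd_iff, Finset.mem_range, Finset.mem_Icc, and_imp]
  refine forall_congr' fun i => ?_
  rw [show i < N - 1 ↔ i + 1 < N by omega]
  refine imp_congr_right fun hi => ?_
  rw [Nat.sInf_setOf_lt_pow_le_iff hp.one_lt,
    hp.forall_dvd_choose_iff_lt_pow_padicValNat (hpos i (by omega)).ne']

/-- `p` divides the Garnir content iff `ν_p(a_i) ≥ ℓ_p(a_{i+1} - 1)` for all
`1 ≤ i ≤ N - 1`.  (When `a_{i+1} = 1`, the infimum `ℓ_p(0) = sInf {j | 0 < p^j} = 0`,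
so the condition holds vacuously.) -/
theorem prime_dvd_garnirContent_iff (p N : ℕ) (hp : p.Prime) (hN : 1 ≤ N)
    (a : ℕ → ℕ) (hpos : ∀ i, i < N → 0 < a i)
    (hdec : ∀ i j, i ≤ j → j < N → a j ≤ a i) :
    p ∣ garnirContent N a ↔
      ∀ i, i + 1 < N →
        sInf {j : ℕ | a (i + 1) - 1 < p ^ j} ≤ padicValNat p (a i) :=
  prime_dvd_garnirContent_iff_general p N hp a hpos
end

section
/- Fix e ≥ 3 and I = Z/eZ. Let S⁺ = (j, j+1, ..., j+a-1), S⁻ = (k, k-1, ..., k-b+1), and let i = (i_1,...,i_{a+b}) ∈ Shuf(S⁺,S⁻). Let H(i) be the subgroup of S_{a+b} generated by the simple transpositions s_m with s_m·i = i, and let σ_i be the unique minimal-length element of Sh(i; S⁺, S⁻). Then Sh(i; S⁺, S⁻) = {hσ_i : h ∈ H(i)}; in particular |Sh(i; S⁺, S⁻)| = 2^t where t = #{r : 1 ≤ r ≤ a+b-1, i_r = i_{r+1}}. -/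
/-!
In a shuffle `σ` realizing `i`, the letter at position `p` is `j + c` if it comes from `S⁺` and
`k - p + c` if it comes from `S⁻`, where `c` is the number of earlier positions holding letters of
`S⁺`. Consequently `i_m = i_{m+1}` forces the two letters to come from different words, two such
pairs `(m, m+1)` never overlap, and swapping a pair yields another realizing shuffle. Conversely,
reading `i` from left to right shows (using `2 ≠ 0`, i.e. `e ≥ 3`) that there is only one realizing
shuffle which puts the `S⁺`-letter first in every such pair. So the `t` swaps act on the realizing
shuffles like the coordinate flips on the cube `{0,1}^t`, with this shuffle as the base point.
-/

open Equiv Finset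

/-- Modelled on the cube `{0,1}^M`: `g m` flips coordinate `m`, and `asc m x` says that
coordinate `m` of `x` is `0`. -/
structure IsFlipSystem {G ι : Type*} [Group G] (s : Set G) (M : Finset ι) (g : ι → G)
    (asc : ι → G → Prop) : Prop where
  inv_eq : ∀ m ∈ M, (g m)⁻¹ = g m
  mul_mem_of_mem : ∀ m ∈ M, ∀ x ∈ s, g m * x ∈ s
  asc_mul_iff : ∀ m ∈ M, ∀ x ∈ s, asc m (g m * x) ↔ ¬asc m x
  asc_mul_iff_of_ne : ∀ m ∈ M, ∀ m' ∈ M, m ≠ m' → ∀ x ∈ s, (asc m' (g m * x) ↔ asc m' x)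

namespace IsFlipSystem

variable {G ι : Type*} [Group G] {s : Set G} {M : Finset ι} {g : ι → G} {asc : ι → G → Prop}

theorem mul_mul_cancel_left (hS : IsFlipSystem s M g asc) {m : ι} (hm : m ∈ M) (x : G) :
    g m * (g m * x) = x := by
  simpa only [hS.inv_eq m hm] using inv_mul_cancel_left (g m) x

theorem closure_mul_mem (hS : IsFlipSystem s M g asc) {h x : G}
    (hh : h ∈ Subgroup.closure (g '' M)) (hx : x ∈ s) : h * x ∈ s := by
  induction hh using Subgroup.closure_induction'' generalizing x with
  | mem _ hy =>
    obtain ⟨m, hm, rfl⟩ := hy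
    exact hS.mul_mem_of_mem m hm x hx
  | inv_mem _ hy =>
    obtain ⟨m, hm, rfl⟩ := hy
    rw [hS.inv_eq m hm]
    exact hS.mul_mem_of_mem m hm x hx
  | one => rwa [one_mul]
  | mul _ _ _ _ ih₁ ih₂ =>
    rw [mul_assoc]
    exact ih₁ (ih₂ hx)

theorem exists_mem_closure_mul (hS : IsFlipSystem s M g asc) {x : G} (hx : x ∈ s) :
    ∃ h ∈ Subgroup.closure (g '' M), ∃ y ∈ s, (∀ m ∈ M, asc m y) ∧ x = h * y := by
  classical
  induction hn : #{m ∈ M | ¬asc m x} generalizing x with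
  | zero =>
    refine ⟨1, one_mem _, x, hx, fun m hm => ?_, (one_mul x).symm⟩
    rw [card_eq_zero, filter_eq_empty_iff] at hn
    exact not_not.mp (hn hm)
  | succ n ih =>
    obtain ⟨m, hm⟩ : {m ∈ M | ¬asc m x}.Nonempty := card_pos.mp (by omega)
    rw [mem_filter] at hm
    have hdesc : {m' ∈ M | ¬asc m' (g m * x)} = ({m' ∈ M | ¬asc m' x}).erase m := by
      ext m'
      simp only [mem_filter, mem_erase]
      by_cases hm' : m' = m
      · subst hm'
        simp [hS.asc_mul_iff m' hm.1 x hx, hm.2]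
      · by_cases hm'M : m' ∈ M
        · simp [hm', hm'M, hS.asc_mul_iff_of_ne m hm.1 m' hm'M (Ne.symm hm') x hx]
        · simp [hm'M]
    obtain ⟨h, hh, y, hy, hasc, hxy⟩ := ih (hS.mul_mem_of_mem m hm.1 x hx)
      (by rw [hdesc, card_erase_of_mem (mem_filter.mpr hm), hn, Nat.add_sub_cancel])
    refine ⟨g m * h, mul_mem (Subgroup.subset_closure ⟨m, hm.1, rfl⟩) hh, y, hy, hasc, ?_⟩
    rw [mul_assoc, ← hxy, hS.mul_mul_cancel_left hm.1]

theorem setOf_asc_on_sdiff_insert [DecidableEq ι] (hS : IsFlipSystem s M g asc) {m₀ : ι}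
    (hm₀ : m₀ ∈ M) (U : Finset ι) :
    {x ∈ s | ∀ m ∈ M \ insert m₀ U, asc m x} =
      {x ∈ s | ∀ m ∈ M \ U, asc m x} ∪ (g m₀ * ·) '' {x ∈ s | ∀ m ∈ M \ U, asc m x} := by
  ext x
  simp only [Set.mem_union, Set.mem_image, Set.mem_sep_iff, mem_sdiff, mem_insert, not_or]
  constructor
  · rintro ⟨hx, hasc⟩
    by_cases h₀ : asc m₀ x
    · refine Or.inl ⟨hx, fun m ⟨hm, hmU⟩ => ?_⟩
      by_cases hmm₀ : m = m₀
      · exact hmm₀ ▸ h₀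
      · exact hasc m ⟨hm, hmm₀, hmU⟩
    · refine Or.inr ⟨g m₀ * x, ⟨hS.mul_mem_of_mem m₀ hm₀ x hx, fun m ⟨hm, hmU⟩ => ?_⟩,
        hS.mul_mul_cancel_left hm₀ x⟩
      by_cases hmm₀ : m = m₀
      · exact hmm₀ ▸ (hS.asc_mul_iff m₀ hm₀ x hx).mpr h₀
      · exact (hS.asc_mul_iff_of_ne m₀ hm₀ m hm (Ne.symm hmm₀) x hx).mpr (hasc m ⟨hm, hmm₀, hmU⟩)
  · rintro (⟨hx, hasc⟩ | ⟨y, ⟨hy, hasc⟩, rfl⟩)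
    · exact ⟨hx, fun m ⟨hm, _, hmU⟩ => hasc m ⟨hm, hmU⟩⟩
    · refine ⟨hS.mul_mem_of_mem m₀ hm₀ y hy, fun m ⟨hm, hmm₀, hmU⟩ => ?_⟩
      exact (hS.asc_mul_iff_of_ne m₀ hm₀ m hm (Ne.symm hmm₀) y hy).mpr (hasc m ⟨hm, hmU⟩)

theorem encard_setOf_asc_on_sdiff [DecidableEq ι] (hS : IsFlipSystem s M g asc)
    (huniq : ∀ y ∈ s, ∀ y' ∈ s, (∀ m ∈ M, asc m y) → (∀ m ∈ M, asc m y') → y = y')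
    {y₀ : G} (hy₀ : y₀ ∈ s) (hasc₀ : ∀ m ∈ M, asc m y₀) {U : Finset ι} (hU : U ⊆ M) :
    {x ∈ s | ∀ m ∈ M \ U, asc m x}.encard = 2 ^ #U := by
  induction U using Finset.induction_on with
  | empty =>
    have hone : {x ∈ s | ∀ m ∈ M \ ∅, asc m x} = {y₀} := by
      ext x
      simp only [sdiff_empty, Set.mem_sep_iff, Set.mem_singleton_iff]
      constructor
      · exact fun ⟨hx, hasc⟩ => huniq x hx y₀ hy₀ hasc hasc₀
      · rintro rfl
        exact ⟨hy₀, hasc₀⟩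
    rw [hone, Set.encard_singleton, card_empty, pow_zero]
  | @insert m₀ U hm₀U ih =>
    have hm₀ : m₀ ∈ M := hU (mem_insert_self m₀ U)
    set S := {x ∈ s | ∀ m ∈ M \ U, asc m x}
    have hdisj : Disjoint S ((g m₀ * ·) '' S) := by
      rw [Set.disjoint_left]
      rintro _ ⟨-, hasc⟩ ⟨y, ⟨hy, hasc'⟩, rfl⟩
      have hm₀' : m₀ ∈ M \ U := mem_sdiff.mpr ⟨hm₀, hm₀U⟩
      exact (hS.asc_mul_iff m₀ hm₀ y hy).mp (hasc _ hm₀') (hasc' _ hm₀')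
    rw [hS.setOf_asc_on_sdiff_insert hm₀, Set.encard_union_eq hdisj,
      (mul_right_injective _).encard_image, ih ((subset_insert m₀ U).trans hU),
      card_insert_of_notMem hm₀U, pow_succ, mul_two]

theorem ncard_eq_two_pow (hS : IsFlipSystem s M g asc)
    (huniq : ∀ y ∈ s, ∀ y' ∈ s, (∀ m ∈ M, asc m y) → (∀ m ∈ M, asc m y') → y = y')
    {x : G} (hx : x ∈ s) : s.ncard = 2 ^ #M := by
  classical
  obtain ⟨-, -, y₀, hy₀, hasc₀, -⟩ := hS.exists_mem_closure_mul hx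
  have hR := hS.encard_setOf_asc_on_sdiff huniq hy₀ hasc₀ (subset_refl M)
  simp only [sdiff_self, bot_eq_empty, notMem_empty, IsEmpty.forall_iff, implies_true,
    Set.sep_true] at hR
  rw [Set.ncard_def, hR]
  norm_cast

theorem eq_image_mul (hS : IsFlipSystem s M g asc)
    (huniq : ∀ y ∈ s, ∀ y' ∈ s, (∀ m ∈ M, asc m y) → (∀ m ∈ M, asc m y') → y = y')
    {x₀ : G} (hx₀ : x₀ ∈ s) : s = (· * x₀) '' (Subgroup.closure (g '' M) : Set G) := by
  ext x
  constructor
  · intro hx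
    obtain ⟨h, hh, y, hy, hasc, rfl⟩ := hS.exists_mem_closure_mul hx
    obtain ⟨h₀, hh₀, y₀, hy₀, hasc₀, rfl⟩ := hS.exists_mem_closure_mul hx₀
    obtain rfl := huniq y hy y₀ hy₀ hasc hasc₀
    exact ⟨h * h₀⁻¹, mul_mem hh (inv_mem hh₀), by group⟩
  · rintro ⟨h, hh, rfl⟩
    exact hS.closure_mul_mem hh hx₀

end IsFlipSystem

theorem card_filter_inv_apply_mem_Ico {σ : Perm ℕ} {lo hi p : ℕ}
    (hσ : StrictMonoOn σ (Set.Ico lo hi)) (hp : σ⁻¹ p ∈ Set.Ico lo hi) :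
    #{q ∈ range p | σ⁻¹ q ∈ Set.Ico lo hi} = σ⁻¹ p - lo := by
  have himage : {q ∈ range p | σ⁻¹ q ∈ Set.Ico lo hi} = (Ico lo (σ⁻¹ p)).image σ := by
    ext q
    simp only [mem_filter, mem_range, mem_image, mem_Ico]
    constructor
    · rintro ⟨hqp, hq⟩
      refine ⟨σ⁻¹ q, ⟨hq.1, ?_⟩, σ.apply_symm_apply q⟩
      rwa [← hσ.lt_iff_lt hq hp, Perm.coe_inv, apply_symm_apply, apply_symm_apply]
    · rintro ⟨x, hx, rfl⟩
      have hx' : x ∈ Set.Ico lo hi := ⟨hx.1, hx.2.trans hp.2⟩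
      refine ⟨?_, by rwa [Perm.coe_inv, symm_apply_apply]⟩
      simpa only [Perm.coe_inv, apply_symm_apply] using hσ hx' hp hx.2
  rw [himage, card_image_of_injective _ σ.injective, Nat.card_Ico]

def IsShuffle (a b : ℕ) (σ : Perm ℕ) : Prop :=
  (∀ x, a + b ≤ x → σ x = x) ∧ (∀ x y, x < y → y < a → σ x < σ y) ∧
    (∀ x y, a ≤ x → x < y → y < a + b → σ x < σ y)

def countFirst (a : ℕ) (σ : Perm ℕ) (p : ℕ) : ℕ := #{q ∈ range p | σ⁻¹ q < a}

theorem countFirst_succ (a : ℕ) (σ : Perm ℕ) (p : ℕ) :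
    countFirst a σ (p + 1) = countFirst a σ p + if σ⁻¹ p < a then 1 else 0 := by
  simp only [countFirst, card_filter, sum_range_succ]

theorem countFirst_le (a : ℕ) (σ : Perm ℕ) (p : ℕ) : countFirst a σ p ≤ p :=
  (card_filter_le _ _).trans (card_range p).le

namespace IsShuffle

variable {a b : ℕ} {σ τ : Perm ℕ}

theorem inv_apply_of_le (hσ : IsShuffle a b σ) {p : ℕ} (hp : a + b ≤ p) : σ⁻¹ p = p :=
  Perm.inv_eq_iff_eq.mpr (hσ.1 p hp).symm

theorem inv_apply_lt (hσ : IsShuffle a b σ) {p : ℕ} (hp : p < a + b) : σ⁻¹ p < a + b := by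
  by_contra! h
  have hfix : σ (σ⁻¹ p) = σ⁻¹ p := hσ.1 _ h
  have hself : σ (σ⁻¹ p) = p := σ.apply_symm_apply p
  omega

theorem strictMonoOn_first (hσ : IsShuffle a b σ) : StrictMonoOn σ (Set.Ico 0 a) :=
  fun x _ y hy hxy => hσ.2.1 x y hxy hy.2

theorem strictMonoOn_second (hσ : IsShuffle a b σ) : StrictMonoOn σ (Set.Ico a (a + b)) :=
  fun x hx y hy hxy => hσ.2.2 x y hx.1 hxy hy.2

theorem inv_apply_eq_countFirst (hσ : IsShuffle a b σ) {p : ℕ} (h : σ⁻¹ p < a) :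
    σ⁻¹ p = countFirst a σ p := by
  have := card_filter_inv_apply_mem_Ico hσ.strictMonoOn_first ⟨Nat.zero_le _, h⟩
  simp only [Set.mem_Ico, zero_le, true_and, Nat.sub_zero] at this
  exact this.symm

theorem inv_apply_eq_add_sub_countFirst (hσ : IsShuffle a b σ) {p : ℕ} (hp : p < a + b)
    (h : a ≤ σ⁻¹ p) : σ⁻¹ p = a + (p - countFirst a σ p) := by
  have hsecond := card_filter_inv_apply_mem_Ico hσ.strictMonoOn_second ⟨h, hσ.inv_apply_lt hp⟩
  have hsplit := card_filter_add_card_filter_not (s := range p) (fun q => σ⁻¹ q < a)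
  have hcongr : {q ∈ range p | ¬σ⁻¹ q < a} = {q ∈ range p | σ⁻¹ q ∈ Set.Ico a (a + b)} := by
    refine filter_congr fun q hq => ?_
    have := hσ.inv_apply_lt (p := q) (by rw [mem_range] at hq; omega)
    simp only [Set.mem_Ico, not_lt]
    omega
  rw [hcongr, hsecond, card_range] at hsplit
  unfold countFirst
  omega

theorem ext_of_inv_apply_lt_iff (hσ : IsShuffle a b σ) (hτ : IsShuffle a b τ)
    (h : ∀ p < a + b, σ⁻¹ p < a ↔ τ⁻¹ p < a) : σ = τ := by
  refine inv_inj.mp (Perm.ext fun p => ?_)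
  rcases lt_or_ge p (a + b) with hp | hp
  · have hcount : countFirst a σ p = countFirst a τ p :=
      congrArg card (filter_congr fun q hq => h q (by rw [mem_range] at hq; omega))
    by_cases hfirst : σ⁻¹ p < a
    · rw [hσ.inv_apply_eq_countFirst hfirst, hτ.inv_apply_eq_countFirst ((h p hp).mp hfirst),
        hcount]
    · rw [hσ.inv_apply_eq_add_sub_countFirst hp (not_lt.mp hfirst),
        hτ.inv_apply_eq_add_sub_countFirst hp (not_lt.mp (mt (h p hp).mpr hfirst)), hcount]
  · rw [hσ.inv_apply_of_le hp, hτ.inv_apply_of_le hp]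

theorem swap_mul (hσ : IsShuffle a b σ) {m : ℕ} (hm : m + 1 < a + b)
    (hmixed : σ⁻¹ m < a ↔ a ≤ σ⁻¹ (m + 1)) : IsShuffle a b (swap m (m + 1) * σ) := by
  have hlt : ∀ x y, σ x < σ y → (x < a ↔ y < a) →
      swap m (m + 1) (σ x) < swap m (m + 1) (σ y) := by
    intro x y hxy hblock
    have : ¬(σ x = m ∧ σ y = m + 1) := by
      rintro ⟨hx, hy⟩
      rw [← Perm.eq_inv_iff_eq] at hx hy
      rw [← hx, ← hy] at hmixed
      omega
    rw [swap_apply_def, swap_apply_def]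
    split_ifs <;> omega
  refine ⟨fun x hx => ?_, fun x y hxy hy => ?_, fun x y hx hxy hy => ?_⟩
  · rw [Perm.mul_apply, hσ.1 x hx, swap_apply_of_ne_of_ne (by omega) (by omega)]
  · exact hlt x y (hσ.2.1 x y hxy hy) (by omega)
  · exact hlt x y (hσ.2.2 x y hx hxy hy) (by omega)

end IsShuffle

/-- The word `S⁺S⁻ = (j, j+1, …, j+a-1, k, k-1, …, k-b+1)`, indexed from `0`. -/
def concatWord {R : Type*} [AddGroupWithOne R] (a : ℕ) (j k : R) (s : ℕ) : R :=
  if s < a then j + (s : R) else k - ((s - a : ℕ) : R)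

theorem IsShuffle.concatWord_inv_apply {R : Type*} [CommRing R] {a b : ℕ} {σ : Perm ℕ}
    (hσ : IsShuffle a b σ) (j k : R) {p : ℕ} (hp : p < a + b) :
    concatWord a j k (σ⁻¹ p) = (if σ⁻¹ p < a then j else k - p) + countFirst a σ p := by
  unfold concatWord
  split_ifs with hfirst
  · rw [← hσ.inv_apply_eq_countFirst hfirst]
  · rw [hσ.inv_apply_eq_add_sub_countFirst hp (not_lt.mp hfirst), Nat.add_sub_cancel_left,
      Nat.cast_sub (countFirst_le a σ p)]
    ring

def equalPositions {R : Type*} [DecidableEq R] (i : ℕ → R) (n : ℕ) : Finset ℕ :=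
  {m ∈ range (n - 1) | i m = i (m + 1)}

theorem mem_equalPositions {R : Type*} [DecidableEq R] {i : ℕ → R} {n m : ℕ} :
    m ∈ equalPositions i n ↔ m + 1 < n ∧ i m = i (m + 1) := by
  rw [equalPositions, mem_filter, mem_range, Nat.lt_sub_iff_add_lt]

/-- `σ ∈ Sh(i; S⁺, S⁻)`: position `p` of `i` carries letter number `σ⁻¹ p` of `S⁺S⁻`. -/
def Realizes {R : Type*} [AddGroupWithOne R] (a b : ℕ) (j k : R) (i : ℕ → R) (σ : Perm ℕ) :
    Prop :=
  IsShuffle a b σ ∧ i = concatWord a j k ∘ ⇑σ⁻¹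

namespace Realizes

variable {R : Type*} [CommRing R] {a b : ℕ} {j k : R} {i : ℕ → R} {σ τ : Perm ℕ}

theorem apply_eq (hσ : Realizes a b j k i σ) {p : ℕ} (hp : p < a + b) :
    i p = (if σ⁻¹ p < a then j else k - p) + countFirst a σ p := by
  rw [hσ.2, Function.comp_apply, hσ.1.concatWord_inv_apply j k hp]

theorem inv_apply_lt_iff_le_of_eq [Nontrivial R] (hσ : Realizes a b j k i σ) {m : ℕ}
    (hm : m + 1 < a + b) (heq : i m = i (m + 1)) : σ⁻¹ m < a ↔ a ≤ σ⁻¹ (m + 1) := by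
  have h₀ := hσ.apply_eq (p := m) (by omega)
  have h₁ := hσ.apply_eq hm
  rw [countFirst_succ] at h₁
  have hfirst : ¬(σ⁻¹ m < a ∧ σ⁻¹ (m + 1) < a) := by
    rintro ⟨hm₀, hm₁⟩
    rw [if_pos hm₀] at h₀
    rw [if_pos hm₁, if_pos hm₀] at h₁
    push_cast at h₁
    exact one_ne_zero (by linear_combination h₀ - h₁ - heq)
  have hsecond : ¬(a ≤ σ⁻¹ m ∧ a ≤ σ⁻¹ (m + 1)) := by
    rintro ⟨hm₀, hm₁⟩
    rw [if_neg hm₀.not_gt] at h₀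
    rw [if_neg hm₁.not_gt, if_neg hm₀.not_gt] at h₁
    push_cast at h₁
    exact one_ne_zero (by linear_combination h₁ - h₀ + heq)
  omega

theorem add_one_notMem_equalPositions [Nontrivial R] [DecidableEq R]
    (hσ : Realizes a b j k i σ) {m : ℕ} (hm : m ∈ equalPositions i (a + b)) :
    m + 1 ∉ equalPositions i (a + b) := by
  rw [mem_equalPositions] at hm ⊢
  rintro ⟨hm₂, heq'⟩
  obtain ⟨-, heq⟩ := hm
  have hmixed := hσ.inv_apply_lt_iff_le_of_eq (by omega) heq
  have hmixed' : σ⁻¹ (m + 1) < a ↔ a ≤ σ⁻¹ (m + 2) := hσ.inv_apply_lt_iff_le_of_eq hm₂ heq'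
  have h₀ := hσ.apply_eq (p := m) (by omega)
  have h₂ := hσ.apply_eq hm₂
  rw [countFirst_succ, countFirst_succ] at h₂
  by_cases hm₀ : σ⁻¹ m < a
  · have hm₁ : ¬σ⁻¹ (m + 1) < a := by omega
    have hm₂ : σ⁻¹ (m + 2) < a := by omega
    simp only [hm₀, hm₁, hm₂, if_true, if_false] at h₀ h₂
    push_cast at h₂
    exact one_ne_zero (by linear_combination h₀ - h₂ - heq - heq')
  · have hm₁ : σ⁻¹ (m + 1) < a := by omega
    have hm₂ : ¬σ⁻¹ (m + 2) < a := by omega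
    simp only [hm₀, hm₁, hm₂, if_true, if_false] at h₀ h₂
    push_cast at h₂
    exact one_ne_zero (by linear_combination h₂ - h₀ + heq + heq')

theorem swap_mul [Nontrivial R] (hσ : Realizes a b j k i σ) {m : ℕ} (hm : m + 1 < a + b)
    (heq : i m = i (m + 1)) : Realizes a b j k i (swap m (m + 1) * σ) := by
  refine ⟨hσ.1.swap_mul hm (hσ.inv_apply_lt_iff_le_of_eq hm heq), funext fun p => ?_⟩
  have hi : i (swap m (m + 1) p) = i p := by
    rw [swap_apply_def]
    split_ifs <;> subst_vars <;> simp only [heq]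
  rw [Function.comp_apply, mul_inv_rev, swap_inv, Perm.mul_apply, ← hi, hσ.2, Function.comp_apply]

theorem inv_apply_lt_of_agree [DecidableEq R] (h2 : (2 : R) ≠ 0) (hσ : Realizes a b j k i σ)
    (hτ : Realizes a b j k i τ) (hτasc : ∀ m ∈ equalPositions i (a + b), τ⁻¹ m < τ⁻¹ (m + 1))
    {p : ℕ} (hp : p < a + b) (hagree : ∀ q < p, σ⁻¹ q < a ↔ τ⁻¹ q < a) (hσp : σ⁻¹ p < a) :
    τ⁻¹ p < a := by
  have : Nontrivial R := nontrivial_of_ne 2 0 h2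
  by_contra hτp
  set c := countFirst a σ p
  have hc : countFirst a τ p = c :=
    congrArg card (filter_congr fun q hq => (hagree q (mem_range.mp hq)).symm)
  have hσp' := hσ.apply_eq hp
  have hτp' := hτ.apply_eq hp
  rw [if_pos hσp] at hσp'
  rw [if_neg hτp, hc] at hτp'
  have hp₁ : p + 1 < a + b := by
    have hσc := hσ.1.inv_apply_eq_countFirst hσp
    have hτc := hτ.1.inv_apply_eq_add_sub_countFirst hp (not_lt.mp hτp)
    have := hτ.1.inv_apply_lt hp
    omega
  have hσ₁ := hσ.apply_eq hp₁
  have hτ₁ := hτ.apply_eq hp₁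
  rw [countFirst_succ, if_pos hσp] at hσ₁
  rw [countFirst_succ, if_neg hτp, hc] at hτ₁
  by_cases hσp₁ : σ⁻¹ (p + 1) < a <;> by_cases hτp₁ : τ⁻¹ (p + 1) < a <;>
    simp only [hσp₁, hτp₁, if_true, if_false] at hσ₁ hτ₁ <;> push_cast at hσ₁ hτ₁
  · exact one_ne_zero (by linear_combination hτ₁ - hσ₁)
  · exact h2 (by linear_combination hτ₁ - hσ₁ + hσp' - hτp')
  · have hasc := hτasc p (mem_equalPositions.mpr ⟨hp₁, by rw [hσp', hτ₁, add_zero]⟩)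
    omega
  · exact one_ne_zero (by linear_combination hτ₁ - hσ₁)

theorem eq_of_ascending [DecidableEq R] (h2 : (2 : R) ≠ 0) (hσ : Realizes a b j k i σ)
    (hτ : Realizes a b j k i τ) (hσasc : ∀ m ∈ equalPositions i (a + b), σ⁻¹ m < σ⁻¹ (m + 1))
    (hτasc : ∀ m ∈ equalPositions i (a + b), τ⁻¹ m < τ⁻¹ (m + 1)) : σ = τ := by
  refine hσ.1.ext_of_inv_apply_lt_iff hτ.1 fun p => ?_
  induction p using Nat.strong_induction_on with
  | _ p ih =>
    intro hp
    have hagree : ∀ q < p, σ⁻¹ q < a ↔ τ⁻¹ q < a := fun q hq => ih q hq (by omega)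
    exact ⟨hσ.inv_apply_lt_of_agree h2 hτ hτasc hp hagree,
      hτ.inv_apply_lt_of_agree h2 hσ hσasc hp fun q hq => (hagree q hq).symm⟩

end Realizes

theorem isFlipSystem_realizes {R : Type*} [CommRing R] [Nontrivial R] [DecidableEq R]
    (a b : ℕ) (j k : R) (i : ℕ → R) :
    IsFlipSystem {σ | Realizes a b j k i σ} (equalPositions i (a + b))
      (fun m => swap m (m + 1)) (fun m σ => σ⁻¹ m < σ⁻¹ (m + 1)) where
  inv_eq m _ := swap_inv m (m + 1)
  mul_mem_of_mem m hm σ hσ := Realizes.swap_mul hσ (mem_equalPositions.mp hm).1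
    (mem_equalPositions.mp hm).2
  asc_mul_iff m _ σ _ := by
    simp only [mul_inv_rev, swap_inv, Perm.mul_apply, swap_apply_left, swap_apply_right, not_lt]
    exact ⟨le_of_lt, fun h => h.lt_of_ne (σ⁻¹.injective.ne (by omega))⟩
  asc_mul_iff_of_ne m hm m' hm' hne σ hσ := by
    have h₁ : m' ≠ m + 1 := fun h => Realizes.add_one_notMem_equalPositions hσ hm (h ▸ hm')
    have h₂ : m ≠ m' + 1 := fun h => Realizes.add_one_notMem_equalPositions hσ hm' (h ▸ hm)
    simp only [mul_inv_rev, swap_inv, Perm.mul_apply]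
    rw [swap_apply_of_ne_of_ne hne.symm h₁, swap_apply_of_ne_of_ne (by omega) (by omega)]

theorem shuffle_coset_description_general (e a b : ℕ) (he : 3 ≤ e) (j k : ZMod e)
    (base : ℕ → ZMod e)
    (hbase : base = fun s : ℕ => if s < a then j + (s : ZMod e) else k - ((s - a : ℕ) : ZMod e))
    (Shuf : Set (Equiv.Perm ℕ))
    (hShuf : Shuf = {σ | (∀ x, a + b ≤ x → σ x = x) ∧
      (∀ x y, x < y → y < a → σ x < σ y) ∧
      (∀ x y, a ≤ x → x < y → y < a + b → σ x < σ y)})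
    (len : Equiv.Perm ℕ → ℕ)
    (i : ℕ → ZMod e)
    (H : Subgroup (Equiv.Perm ℕ))
    (hH : H = Subgroup.closure
      {π | ∃ m : ℕ, m + 1 < a + b ∧ i m = i (m + 1) ∧ π = Equiv.swap m (m + 1)})
    (σi : Equiv.Perm ℕ)
    (hσi : σi ∈ Shuf ∧ i = base ∘ ⇑σi⁻¹ ∧
      ∀ τ ∈ Shuf, i = base ∘ ⇑τ⁻¹ → len σi ≤ len τ) :
    {τ | τ ∈ Shuf ∧ i = base ∘ ⇑τ⁻¹} = (fun h => h * σi) '' (H : Set (Equiv.Perm ℕ)) ∧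
    Set.ncard {τ | τ ∈ Shuf ∧ i = base ∘ ⇑τ⁻¹} =
      2 ^ (((Finset.range (a + b - 1)).filter fun m => i m = i (m + 1)).card) := by
  subst hbase hShuf hH
  have h2 : (2 : ZMod e) ≠ 0 := by
    rw [← Nat.cast_ofNat, Ne, ZMod.natCast_eq_zero_iff]
    exact fun h => absurd (Nat.le_of_dvd two_pos h) (by omega)
  have : Nontrivial (ZMod e) := nontrivial_of_ne 2 0 h2
  have hS := isFlipSystem_realizes a b j k i
  have hσi' : Realizes a b j k i σi := ⟨hσi.1, hσi.2.1⟩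
  have hgens : {π | ∃ m, m + 1 < a + b ∧ i m = i (m + 1) ∧ π = swap m (m + 1)} =
      (fun m => swap m (m + 1)) '' equalPositions i (a + b) := by
    ext π
    simp only [Set.mem_ofPred_eq, Set.mem_image, mem_coe, mem_equalPositions, and_assoc, eq_comm]
  rw [hgens]
  exact ⟨hS.eq_image_mul (fun _ hσ _ hτ => Realizes.eq_of_ascending h2 hσ hτ) hσi',
    hS.ncard_eq_two_pow (fun _ hσ _ hτ => Realizes.eq_of_ascending h2 hσ hτ) hσi'⟩

/-- Let `i` be a shuffle of `S⁺ = (j, ..., j+a-1)` and `S⁻ = (k, ..., k-b+1)` in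
`ℤ/eℤ` (e ≥ 3), let `σᵢ` be the unique minimal-length `(a,b)`-shuffle realizing
`i`, and let `H(i)` be the subgroup generated by the simple transpositions
`s_m = (m, m+1)` with `i m = i (m+1)`.  Then the set of shuffles realizing `i`
is exactly `{h * σᵢ | h ∈ H(i)}`; in particular its cardinality is `2^t` where
`t = #{m | i m = i (m+1)}`. -/
theorem shuffle_coset_description (e a b : ℕ) (he : 3 ≤ e) (j k : ZMod e)
    (base : ℕ → ZMod e)
    (hbase : base = fun s : ℕ => if s < a then j + (s : ZMod e) else k - ((s - a : ℕ) : ZMod e))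
    (Shuf : Set (Equiv.Perm ℕ))
    (hShuf : Shuf = {σ | (∀ x, a + b ≤ x → σ x = x) ∧
      (∀ x y, x < y → y < a → σ x < σ y) ∧
      (∀ x y, a ≤ x → x < y → y < a + b → σ x < σ y)})
    (len : Equiv.Perm ℕ → ℕ)
    (hlen : len = fun σ =>
      ((Finset.range (a + b) ×ˢ Finset.range (a + b)).filter
        fun q => q.1 < q.2 ∧ σ q.2 < σ q.1).card)
    (i : ℕ → ZMod e)
    (H : Subgroup (Equiv.Perm ℕ))
    (hH : H = Subgroup.closure
      {π | ∃ m : ℕ, m + 1 < a + b ∧ i m = i (m + 1) ∧ π = Equiv.swap m (m + 1)})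
    (σi : Equiv.Perm ℕ)
    (hσi : σi ∈ Shuf ∧ i = base ∘ ⇑σi⁻¹ ∧
      ∀ τ ∈ Shuf, i = base ∘ ⇑τ⁻¹ → len σi ≤ len τ) :
    {τ | τ ∈ Shuf ∧ i = base ∘ ⇑τ⁻¹} = (fun h => h * σi) '' (H : Set (Equiv.Perm ℕ)) ∧
    Set.ncard {τ | τ ∈ Shuf ∧ i = base ∘ ⇑τ⁻¹} =
      2 ^ (((Finset.range (a + b - 1)).filter fun m => i m = i (m + 1)).card) :=
  shuffle_coset_description_general e a b he j k base hbase Shuf hShuf len i H hH σi hσi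
end

section
/- Fix e ≥ 3 and I = Z/eZ. Let S⁺ = (j, j+1, ..., j+a-1) and S⁻ = (k, k-1, ..., k-b+1), and let i ∈ Shuf(S⁺,S⁻). Then the set M = {m : 1 ≤ m ≤ a+b-1, i_m = i_{m+1}} of positions fixing i under the corresponding simple transposition satisfies: any two distinct elements m, m' of M have |m - m'| ≥ 2. Consequently the subgroup H(i) = ⟨s_m : m ∈ M⟩ of S_{a+b} is an elementary abelian 2-group of order 2^{|M|}. -/
/-!
A shuffle keeps the letters of `S⁺` in order and those of `S⁻` in order, so two letters of the
same word that land at most two positions apart in `i` were at most two positions apart in that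
word; since `e ≥ 3` they differ. Among three consecutive positions two come from the same word,
so `i_m = i_{m+1} = i_{m+2}` is impossible: `M` has no two consecutive elements. The transpositions
`s_m`, `m ∈ M`, therefore have disjoint supports, commute, and `s_m` is the only one moving `m`;
hence the subgroups `⟨s_m⟩` are independent and `H(i)` is their internal direct product
`(ℤ/2)^M`.
-/

open Subgroup Equiv

theorem ZMod.natCast_ne_natCast_of_lt_of_lt_add {n p q : ℕ} (hpq : p < q) (hqp : q < p + n) :
    (p : ZMod n) ≠ q := by
  intro h
  have hdvd : n ∣ q - p := by
    rw [← ZMod.natCast_eq_zero_iff, Nat.cast_sub hpq.le, h, sub_self]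
  have := Nat.le_of_dvd (by omega) hdvd
  omega

theorem StrictMonoOn.add_sub_le {f : ℕ → ℕ} {s : Set ℕ} (hf : StrictMonoOn f s)
    (hs : s.OrdConnected) {p q : ℕ} (hp : p ∈ s) (hq : q ∈ s) (hpq : p ≤ q) :
    f p + (q - p) ≤ f q := by
  induction q, hpq using Nat.le_induction with
  | base => simp
  | succ q hpq ih =>
    have hq' : q ∈ s := hs.out hp hq ⟨hpq, q.le_succ⟩
    have := hf hq' hq q.lt_succ_self
    have := ih hq'
    omega

theorem StrictMonoOn.lt_and_le_add_two {f : ℕ → ℕ} {s : Set ℕ} (hf : StrictMonoOn f s)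
    (hs : s.OrdConnected) {p q : ℕ} (hp : p ∈ s) (hq : q ∈ s) (hlt : f p < f q)
    (hle : f q ≤ f p + 2) : p < q ∧ q ≤ p + 2 := by
  have hpq : p < q := (hf.lt_iff_lt hp hq).mp hlt
  have := hf.add_sub_le hs hp hq hpq.le
  omega

theorem Subgroup.disjoint_zpowers_of_mul_self_eq_one {G : Type*} [Group G] {g : G} {K : Subgroup G}
    (hg : g * g = 1) (hgK : g ∉ K) : Disjoint (zpowers g) K := by
  have hsq : g ^ (2 : ℤ) = 1 := by rw [zpow_two, hg]
  rw [disjoint_def]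
  intro x hx hk
  obtain ⟨k, rfl⟩ := mem_zpowers_iff.mp hx
  obtain ⟨n, rfl | rfl⟩ := Int.even_or_odd' k
  · simp only [zpow_mul, hsq, one_zpow]
  · rw [zpow_add_one, zpow_mul, hsq, one_zpow, one_mul] at hk
    exact absurd hk hgK

section CommutingFamily

variable {G ι : Type*} [Group G] {g : ι → G}

theorem Subgroup.closure_range_eq_iSup_zpowers (g : ι → G) :
    closure (Set.range g) = ⨆ i, zpowers (g i) := by
  simp_rw [zpowers_eq_closure, ← closure_iUnion, Set.iUnion_singleton_eq_range]

theorem Pairwise.commute_zpowers (hcomm : Pairwise fun i j => Commute (g i) (g j)) :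
    Pairwise fun i j => ∀ x y, x ∈ zpowers (g i) → y ∈ zpowers (g j) → Commute x y := by
  intro i j hij x y hx hy
  obtain ⟨m, rfl⟩ := mem_zpowers_iff.mp hx
  obtain ⟨n, rfl⟩ := mem_zpowers_iff.mp hy
  exact (hcomm hij).zpow_zpow m n

theorem iSupIndep_zpowers_of_smul_ne {α : Type*} [MulAction G α] {x : ι → α}
    (hsq : ∀ i, g i * g i = 1) (hmove : ∀ i, g i • x i ≠ x i)
    (hfix : ∀ i j, j ≠ i → g j • x i = x i) : iSupIndep fun i => zpowers (g i) := by
  refine iSupIndep_def.mpr fun i => ?_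
  have hle : ⨆ (j) (_ : j ≠ i), zpowers (g j) ≤ MulAction.stabilizer G (x i) :=
    iSup₂_le fun j hj => zpowers_le.mpr (hfix i j hj)
  exact (disjoint_zpowers_of_mul_self_eq_one (hsq i) (hmove i)).mono_right hle

variable [Fintype ι]

theorem exists_noncommPiCoprod_eq_of_mem_closure_range
    (hcomm : Pairwise fun i j => Commute (g i) (g j)) {x : G} (hx : x ∈ closure (Set.range g)) :
    ∃ f, noncommPiCoprod hcomm.commute_zpowers f = x := by
  rwa [← MonoidHom.mem_range, noncommPiCoprod_range, ← closure_range_eq_iSup_zpowers]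

theorem commute_of_mem_closure_range (hcomm : Pairwise fun i j => Commute (g i) (g j)) {x y : G}
    (hx : x ∈ closure (Set.range g)) (hy : y ∈ closure (Set.range g)) : Commute x y := by
  obtain ⟨f, rfl⟩ := exists_noncommPiCoprod_eq_of_mem_closure_range hcomm hx
  obtain ⟨f', rfl⟩ := exists_noncommPiCoprod_eq_of_mem_closure_range hcomm hy
  have hff' : f * f' = f' * f := funext fun i => Subtype.ext <| by
    obtain ⟨m, hm⟩ := mem_zpowers_iff.mp (f i).2
    obtain ⟨n, hn⟩ := mem_zpowers_iff.mp (f' i).2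
    simp only [Pi.mul_apply, coe_mul, ← hm, ← hn]
    exact (Commute.refl (g i)).zpow_zpow m n
  exact Commute.map hff' _

theorem mul_self_eq_one_of_mem_closure_range (hcomm : Pairwise fun i j => Commute (g i) (g j))
    (hsq : ∀ i, g i * g i = 1) {x : G} (hx : x ∈ closure (Set.range g)) : x * x = 1 := by
  obtain ⟨f, rfl⟩ := exists_noncommPiCoprod_eq_of_mem_closure_range hcomm hx
  have hff : f * f = 1 := funext fun i => Subtype.ext <| by
    obtain ⟨m, hm⟩ := mem_zpowers_iff.mp (f i).2
    simp only [Pi.mul_apply, coe_mul, ← hm, Pi.one_apply, OneMemClass.coe_one]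
    rw [← (Commute.refl (g i)).mul_zpow, hsq, one_zpow]
  rw [← map_mul, hff, map_one]

theorem card_closure_range (hcomm : Pairwise fun i j => Commute (g i) (g j))
    (hind : iSupIndep fun i => zpowers (g i)) :
    Nat.card (closure (Set.range g)) = ∏ i, orderOf (g i) := by
  rw [closure_range_eq_iSup_zpowers, ← noncommPiCoprod_range (hcomm := hcomm.commute_zpowers),
    ← Nat.card_congr (MonoidHom.ofInjective (injective_noncommPiCoprod_of_iSupIndep hind)).toEquiv,
    Nat.card_pi]
  simp only [Nat.card_zpowers]

end CommutingFamily

section AdjacentSwaps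

variable {M : Set ℕ}

theorem pairwise_commute_swap_succ (hM : ∀ m ∈ M, ∀ m' ∈ M, m < m' → m + 2 ≤ m') :
    Pairwise fun m m' : M => Commute (swap (m : ℕ) (m + 1)) (swap (m' : ℕ) (m' + 1)) := by
  intro m m' hne
  have hne' : (m : ℕ) ≠ m' := Subtype.coe_injective.ne hne
  have := hM m m.2 m' m'.2
  have := hM m' m'.2 m m.2
  refine (Perm.disjoint_swap_swap ?_).commute
  simp only [List.nodup_cons, List.mem_cons, List.not_mem_nil, List.nodup_nil, or_false,
    not_false_eq_true, and_true]
  omega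

theorem iSupIndep_zpowers_swap_succ (hM : ∀ m ∈ M, ∀ m' ∈ M, m < m' → m + 2 ≤ m') :
    iSupIndep fun m : M => zpowers (swap (m : ℕ) (m + 1)) := by
  refine iSupIndep_zpowers_of_smul_ne (x := fun m : M => (m : ℕ)) (fun _ => swap_mul_self _ _)
    (fun m => by simp [Perm.smul_def]) fun m m' hne => ?_
  have hne' : (m : ℕ) ≠ m' := Subtype.coe_injective.ne hne.symm
  have := hM m m.2 m' m'.2
  have := hM m' m'.2 m m.2
  exact swap_apply_of_ne_of_ne (by omega) (by omega)

end AdjacentSwaps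

/-- The word `S⁺S⁻`, with positions counted from `0`. -/
def ascDescWord {e : ℕ} (j k : ZMod e) (a s : ℕ) : ZMod e :=
  if s < a then j + (s : ZMod e) else k - ((s - a : ℕ) : ZMod e)

theorem ascDescWord_ne {e : ℕ} (j k : ZMod e) {a p q : ℕ} (hpq : p < q) (hqp : q < p + e)
    (hside : p < a ↔ q < a) : ascDescWord j k a p ≠ ascDescWord j k a q := by
  unfold ascDescWord
  by_cases hpa : p < a
  · rw [if_pos hpa, if_pos (hside.mp hpa), Ne, add_right_inj]
    exact ZMod.natCast_ne_natCast_of_lt_of_lt_add hpq hqp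
  · rw [if_neg hpa, if_neg (hside.not.mp hpa), Ne, sub_right_inj]
    exact ZMod.natCast_ne_natCast_of_lt_of_lt_add (by omega) (by omega)

section Shuffle

variable {a b : ℕ} {σ : Perm ℕ}

theorem inv_apply_lt_of_fixed (hfix : ∀ x, a + b ≤ x → σ x = x) {r : ℕ} (hr : r < a + b) :
    σ⁻¹ r < a + b := by
  by_contra! h
  have := hfix _ h
  rw [show σ (σ⁻¹ r) = r from σ.apply_symm_apply r] at this
  omega

theorem inv_apply_lt_and_le_add_two (hfix : ∀ x, a + b ≤ x → σ x = x)
    (harm : StrictMonoOn σ (Set.Iio a)) (hleg : StrictMonoOn σ (Set.Ico a (a + b)))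
    {r r' : ℕ} (hr : r < r') (hr' : r' ≤ r + 2) (hr'ab : r' < a + b)
    (hside : σ⁻¹ r < a ↔ σ⁻¹ r' < a) : σ⁻¹ r < σ⁻¹ r' ∧ σ⁻¹ r' ≤ σ⁻¹ r + 2 := by
  have hp := inv_apply_lt_of_fixed hfix (hr.trans hr'ab)
  have hp' := inv_apply_lt_of_fixed hfix hr'ab
  have hlt : σ (σ⁻¹ r) < σ (σ⁻¹ r') := by
    simpa only [Perm.coe_inv, apply_symm_apply] using hr
  have hle : σ (σ⁻¹ r') ≤ σ (σ⁻¹ r) + 2 := by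
    simpa only [Perm.coe_inv, apply_symm_apply] using hr'
  by_cases ha : σ⁻¹ r < a
  · exact harm.lt_and_le_add_two Set.ordConnected_Iio ha (hside.mp ha) hlt hle
  · exact hleg.lt_and_le_add_two Set.ordConnected_Ico ⟨by omega, hp⟩
      ⟨by have := hside.not.mp ha; omega, hp'⟩ hlt hle

theorem ascDescWord_inv_apply_ne {e : ℕ} (he : 3 ≤ e) (j k : ZMod e)
    (hfix : ∀ x, a + b ≤ x → σ x = x)
    (harm : StrictMonoOn σ (Set.Iio a)) (hleg : StrictMonoOn σ (Set.Ico a (a + b)))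
    {r r' : ℕ} (hr : r < r') (hr' : r' ≤ r + 2) (hr'ab : r' < a + b)
    (hside : σ⁻¹ r < a ↔ σ⁻¹ r' < a) :
    ascDescWord j k a (σ⁻¹ r) ≠ ascDescWord j k a (σ⁻¹ r') := by
  obtain ⟨hlt, hle⟩ := inv_apply_lt_and_le_add_two hfix harm hleg hr hr' hr'ab hside
  exact ascDescWord_ne j k hlt (by omega) hside

theorem ascDescWord_inv_apply_not_three_eq {e : ℕ} (he : 3 ≤ e) (j k : ZMod e)
    (hfix : ∀ x, a + b ≤ x → σ x = x)
    (harm : StrictMonoOn σ (Set.Iio a)) (hleg : StrictMonoOn σ (Set.Ico a (a + b)))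
    {m : ℕ} (hm : m + 2 < a + b)
    (h₁ : ascDescWord j k a (σ⁻¹ m) = ascDescWord j k a (σ⁻¹ (m + 1)))
    (h₂ : ascDescWord j k a (σ⁻¹ (m + 1)) = ascDescWord j k a (σ⁻¹ (m + 2))) : False := by
  have hne := fun {r r'} => ascDescWord_inv_apply_ne he j k hfix harm hleg (r := r) (r' := r')
  -- pigeonhole: two of the three preimages lie on the same side of `a`
  rcases (by tauto : (σ⁻¹ m < a ↔ σ⁻¹ (m + 1) < a) ∨ (σ⁻¹ (m + 1) < a ↔ σ⁻¹ (m + 2) < a) ∨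
      (σ⁻¹ m < a ↔ σ⁻¹ (m + 2) < a)) with h | h | h
  · exact hne (by omega) (by omega) (by omega) h h₁
  · exact hne (by omega) (by omega) hm h h₂
  · exact hne (by omega) le_rfl hm h (h₁.trans h₂)

end Shuffle

theorem Equiv.orderOf_swap {α : Type*} [DecidableEq α] {x y : α} (hxy : x ≠ y) :
    orderOf (swap x y) = 2 :=
  orderOf_eq_prime (by rw [sq, swap_mul_self]) (by simpa [swap_eq_one_iff] using hxy)

/-- For a shuffle `i` of `S⁺ = (j, ..., j+a-1)` and `S⁻ = (k, ..., k-b+1)` in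
`ℤ/eℤ` (e ≥ 3), the set `M` of positions `m` with `i m = i (m+1)` contains no
two consecutive integers; consequently the subgroup `H(i) = ⟨s_m : m ∈ M⟩` is an
elementary abelian 2-group of order `2^|M|`. -/
theorem shuffle_stabilizer_elementary_abelian (e a b : ℕ) (he : 3 ≤ e) (j k : ZMod e)
    (σ : Equiv.Perm ℕ)
    (hfix : ∀ x, a + b ≤ x → σ x = x)
    (harm : ∀ x y, x < y → y < a → σ x < σ y)
    (hleg : ∀ x y, a ≤ x → x < y → y < a + b → σ x < σ y)
    (i : ℕ → ZMod e)
    (hi : i = fun r =>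
      (fun s : ℕ => if s < a then j + (s : ZMod e) else k - ((s - a : ℕ) : ZMod e)) (σ⁻¹ r))
    (M : Set ℕ) (hM : M = {m | m + 1 < a + b ∧ i m = i (m + 1)})
    (H : Subgroup (Equiv.Perm ℕ))
    (hH : H = Subgroup.closure {π | ∃ m ∈ M, π = Equiv.swap m (m + 1)}) :
    (∀ m ∈ M, ∀ m' ∈ M, m < m' → m + 2 ≤ m') ∧
    (∀ h ∈ H, h * h = 1) ∧
    (∀ g ∈ H, ∀ h ∈ H, g * h = h * g) ∧
    Nat.card H = 2 ^ M.ncard := by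
  have harm' : StrictMonoOn σ (Set.Iio a) := fun x _ y hy hxy => harm x y hxy hy
  have hleg' : StrictMonoOn σ (Set.Ico a (a + b)) := fun x hx y hy hxy => hleg x y hx.1 hxy hy.2
  have hgap : ∀ m ∈ M, ∀ m' ∈ M, m < m' → m + 2 ≤ m' := by
    subst hM hi
    rintro m ⟨-, h₁⟩ m' ⟨hm', h₂⟩ hlt
    by_contra! hle
    obtain rfl : m' = m + 1 := by omega
    exact ascDescWord_inv_apply_not_three_eq he j k hfix harm' hleg' hm' h₁ h₂
  have : Fintype M := ((Set.finite_Iio (a + b)).subset fun m hm => by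
    rw [hM] at hm; exact Nat.lt_of_succ_lt hm.1).fintype
  have hcomm := pairwise_commute_swap_succ hgap
  obtain rfl : H = closure (Set.range fun m : M => swap (m : ℕ) (m + 1)) := by
    rw [hH]; congr 1; ext; simp [eq_comm]
  refine ⟨hgap,
    fun h hh => mul_self_eq_one_of_mem_closure_range hcomm (fun _ => swap_mul_self _ _) hh,
    fun g hg h hh => commute_of_mem_closure_range hcomm hg hh, ?_⟩
  rw [card_closure_range hcomm (iSupIndep_zpowers_swap_succ hgap)]
  simp [Equiv.orderOf_swap]
end

section
/- Fix e ≥ 3. For any partition ν = (ν_1,...,ν_M) of d, the degree of the row-reading standard tableau T^ν equals Σ_{x=1}^{M} ⌊ν_x / e⌋, where the degree of a standard tableau is defined recursively by deg(∅) = 0 and deg(T) = d_A(ν) + deg(T_{<d}) with A the node containing d, T_{<d} the tableau with d removed, and d_A(ν) = (# addable nodes of ν of the same residue as A strictly below A) − (# removable nodes of ν of the same residue as A strictly below A). -/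
/- A partition is encoded as its list of parts `L` (weakly decreasing, positive),
with `L.getD r 0` the length of (0-indexed) row `r`. -/

/-- Rows at which a node may be added to the partition `L`. -/
def addableRows (L : List ℕ) : Finset ℕ :=
  (Finset.range (L.length + 1)).filter fun r => r = 0 ∨ L.getD r 0 < L.getD (r - 1) 0

/-- Rows at which a node may be removed from the partition `L`. -/
def removableRows (L : List ℕ) : Finset ℕ :=
  (Finset.range L.length).filter fun r => L.getD (r + 1) 0 < L.getD r 0

/-- Residue `(b - a) mod e` of the addable node in row `r` (at column `L.getD r 0`). -/
def addRes (e : ℕ) (L : List ℕ) (r : ℕ) : ZMod e :=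
  (L.getD r 0 : ZMod e) - (r : ZMod e)

/-- Residue `(b - a) mod e` of the removable node in row `r` (at column `L.getD r 0 - 1`). -/
def remRes (e : ℕ) (L : List ℕ) (r : ℕ) : ZMod e :=
  (L.getD r 0 : ZMod e) - 1 - (r : ZMod e)

/-- `d_A(ν)`: for the removable node `A` at the end of row `x`, the number of
addable nodes of the same residue strictly below `A` minus the number of
removable nodes of the same residue strictly below `A`. -/
def dACount (e : ℕ) (L : List ℕ) (x : ℕ) : ℤ :=
  (((addableRows L).filter fun r => x < r ∧ addRes e L r = remRes e L x).card : ℤ) -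
  (((removableRows L).filter fun r => x < r ∧ remRes e L r = remRes e L x).card : ℤ)

/-- Remove the last node (in row-reading order) of the partition `L`:
this is the node containing `d` in the row-reading tableau `T^ν`. -/
def shrink (L : List ℕ) : List ℕ :=
  if L.getLast! ≤ 1 then L.dropLast else L.dropLast ++ [L.getLast! - 1]

/-- The degree recursion for the row-reading tableau, with explicit fuel. -/
def degTAux (e : ℕ) : ℕ → List ℕ → ℤ
  | 0, _ => 0
  | _ + 1, [] => 0
  | n + 1, L => dACount e L (L.length - 1) + degTAux e n (shrink L)

/-- The degree of the row-reading standard tableau `T^ν`, computed by the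
recursion `deg(T) = d_A(ν) + deg(T_{<d})` where `A` is the node containing `d`. -/
def degT (e : ℕ) (L : List ℕ) : ℤ := degTAux e (L.sum + L.length) L

/-!
Peeling off the node containing `d` only shortens the last row, say of length `a`, and the
only node strictly below it is the addable node at the start of the next row. Its residue agrees
with that of the removed node exactly when `e ∣ a`, so each step of the recursion contributes
`[e ∣ a]`, and summing over the nodes of a row of length `a` gives `⌊a / e⌋`.
-/

lemma Nat.div_eq_pred_div_add_ite (a e : ℕ) :
    a / e = (a - 1) / e + if 0 < a ∧ e ∣ a then 1 else 0 := by
  rcases Nat.eq_zero_or_pos a with rfl | ha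
  · simp
  · obtain ⟨b, rfl⟩ := Nat.exists_eq_add_of_lt ha
    simp [Nat.succ_div]

section LastRow

variable (e a : ℕ) (M : List ℕ)

lemma getD_concat_length : (M ++ [a]).getD M.length 0 = a := by
  simp

lemma getD_concat_length_succ : (M ++ [a]).getD (M.length + 1) 0 = 0 := by
  simp

lemma addRes_concat_length_succ_eq_remRes_iff :
    addRes e (M ++ [a]) (M.length + 1) = remRes e (M ++ [a]) M.length ↔ e ∣ a := by
  rw [addRes, remRes, getD_concat_length, getD_concat_length_succ, ← ZMod.natCast_eq_zero_iff]
  push_cast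
  constructor <;> intro h <;> linear_combination -h

lemma dACount_concat_length :
    dACount e (M ++ [a]) M.length = if 0 < a ∧ e ∣ a then 1 else 0 := by
  have below_removable : (removableRows (M ++ [a])).filter
      (fun r => M.length < r ∧ remRes e (M ++ [a]) r = remRes e (M ++ [a]) M.length) = ∅ := by
    ext r
    simp only [removableRows, List.length_append, List.length_singleton, Finset.mem_filter,
      Finset.mem_range, Finset.notMem_empty, iff_false]
    omega
  have below_addable : (addableRows (M ++ [a])).filter
      (fun r => M.length < r ∧ addRes e (M ++ [a]) r = remRes e (M ++ [a]) M.length) =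
      if 0 < a ∧ e ∣ a then {M.length + 1} else ∅ := by
    have mem_iff : ∀ r, (r < M.length + 1 + 1 ∧
        (r = 0 ∨ (M ++ [a]).getD r 0 < (M ++ [a]).getD (r - 1) 0)) ∧ M.length < r ∧
        addRes e (M ++ [a]) r = remRes e (M ++ [a]) M.length ↔
        r = M.length + 1 ∧ 0 < a ∧ e ∣ a := by
      intro r
      constructor
      · rintro ⟨⟨hr, hadd⟩, hlt, hres⟩
        obtain rfl : r = M.length + 1 := by omega
        rw [Nat.add_sub_cancel, getD_concat_length, getD_concat_length_succ] at hadd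
        exact ⟨rfl, by omega, (addRes_concat_length_succ_eq_remRes_iff e a M).1 hres⟩
      · rintro ⟨rfl, ha, hdvd⟩
        refine ⟨⟨by omega, Or.inr ?_⟩, by omega,
          (addRes_concat_length_succ_eq_remRes_iff e a M).2 hdvd⟩
        rwa [Nat.add_sub_cancel, getD_concat_length, getD_concat_length_succ]
    ext r
    simp only [addableRows, List.length_append, List.length_singleton, Finset.mem_filter,
      Finset.mem_range, mem_iff]
    split_ifs with h <;> simp [h]
  rw [dACount, below_removable, below_addable]
  split_ifs <;> simp

lemma shrink_concat : shrink (M ++ [a]) = if a ≤ 1 then M else M ++ [a - 1] := by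
  simp [shrink]

lemma sum_map_div_shrink_concat :
    ((shrink (M ++ [a])).map (· / e)).sum = (M.map (· / e)).sum + (a - 1) / e := by
  rw [shrink_concat]
  split_ifs with ha
  · simp [Nat.sub_eq_zero_of_le ha]
  · simp

lemma sum_add_length_shrink_concat_lt :
    (shrink (M ++ [a])).sum + (shrink (M ++ [a])).length <
      (M ++ [a]).sum + (M ++ [a]).length := by
  rw [shrink_concat]
  split_ifs <;> simp <;> omega

end LastRow

lemma degTAux_succ_concat (e n a : ℕ) (M : List ℕ) :
    degTAux e (n + 1) (M ++ [a]) =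
      dACount e (M ++ [a]) M.length + degTAux e n (shrink (M ++ [a])) := by
  rw [show M.length = (M ++ [a]).length - 1 by simp]
  cases M <;> rfl

theorem degTAux_eq_sum_map_div (e n : ℕ) (L : List ℕ) (hL : L.sum + L.length ≤ n) :
    degTAux e n L = ((L.map (· / e)).sum : ℕ) := by
  induction n generalizing L with
  | zero =>
    obtain rfl : L = [] := List.eq_nil_of_length_eq_zero (by omega)
    rfl
  | succ n ih =>
    obtain rfl | ⟨M, a, rfl⟩ := L.eq_nil_or_concat'
    · rfl
    have shrunk := ih (shrink (M ++ [a])) (by have := sum_add_length_shrink_concat_lt a M; omega)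
    rw [degTAux_succ_concat, dACount_concat_length, shrunk, sum_map_div_shrink_concat,
      List.map_append, List.sum_append, List.map_singleton, List.sum_singleton,
      Nat.div_eq_pred_div_add_ite a e]
    push_cast
    ring

theorem degT_row_reading_general (e : ℕ) (L : List ℕ) :
    degT e L = ((L.map fun x => x / e).sum : ℕ) :=
  degTAux_eq_sum_map_div e _ L le_rfl

/-- The degree of the row-reading standard tableau `T^ν` equals
`Σ_x ⌊ν_x / e⌋`. -/
theorem degT_row_reading (e d : ℕ) (he : 3 ≤ e) (L : List ℕ) (hd : L.sum = d)
    (hpos : ∀ x ∈ L, 0 < x) (hsort : L.Pairwise (· ≥ ·)) :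
    degT e L = ((L.map fun x => x / e).sum : ℕ) :=
  degT_row_reading_general e L
end

section
/- Fix e ≥ 3. Let μ = (μ_1,...,μ_N) be a partition of d with N = k+1 parts, and let λ = (d-k, 1^k). Define T^λ_μ to be the λ-tableau obtained from T^μ by keeping the entries of the first column of T^μ in place and filling the remaining entries of T^μ in increasing order along the first row of λ. Then the residue sequence of T^λ_μ equals the residue sequence i^μ of T^μ if and only if there exist c ∈ {1,...,k+1}, positive integers a_1,...,a_c, and 0 ≤ m < e such that μ = (a_1 e, ..., a_{c-1} e, a_c e − m, 1^{k-c+1}). -/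
/- A partition `μ` is encoded as its list of parts `L`.  `resTrow e L r` is the
residue of the node containing `r` in the row-reading standard tableau `T^μ`:
if `r` lies in (0-indexed) row `a` at (1-indexed) column `b`, its residue is
`b - 1 - a (mod e)`. -/

/-- Residue of the entry `r` of the row-reading tableau of the partition `L`. -/
def resTrow (e : ℕ) (L : List ℕ) (r : ℕ) : ZMod e :=
  let row := ((Finset.range L.length).filter fun a => (L.take a).sum < r).card - 1
  let col := r - (L.take row).sum
  (col : ZMod e) - 1 - (row : ZMod e)

/-- The entries of the first column of `T^μ` below the first row, down to row
`k` (0-indexed): these are the entries placed in the leg of the hook in `T^λ_μ`. -/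
def legEntries (L : List ℕ) (k : ℕ) : Finset ℕ :=
  (Finset.Icc 1 k).image fun a => (L.take a).sum + 1

/-- Residue of the entry `r` of `T^λ_μ`, the `(d-k, 1^k)`-tableau whose leg
carries the first-column entries `T^μ(2,1), ..., T^μ(k+1,1)` of `T^μ` and whose
first row carries the remaining entries in increasing order. -/
def resHook (e : ℕ) (L : List ℕ) (k : ℕ) (r : ℕ) : ZMod e :=
  if r ∈ legEntries L k then
    -(((((Finset.Icc 1 k).filter fun a => (L.take a).sum + 1 ≤ r).card : ℕ)) : ZMod e)
  else ((r - 1 - (((legEntries L k).filter fun x => x < r).card) : ℕ) : ZMod e)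

/-!
Write `s a` for the `a`-th prefix sum of `μ`, so that row `a` of `T^μ` (counted from `0`) holds
the entries `s a < r ≤ s (a + 1)` and `r` has residue `r - s a - 1 - a` there. In `T^λ_μ` the
leg entry `s a + 1` has residue `-a`, as in `T^μ`, while every other entry `r` of row `a` sits in
the first row after exactly `a` leg entries, with residue `r - 1 - a`. So the residue sequences
agree iff `e ∣ s a` for every row `a` with at least two nodes. These rows form an initial segment
of the partition, so the condition says that all long rows but the last are multiples of `e`; the
last long row is written as `a_c e - m` with `m < e`, and the remaining rows are single nodes.
-/

theorem Nat.exists_eq_mul_sub_of_pos {e v : ℕ} (he : 0 < e) (hv : 0 < v) :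
    ∃ q m, 0 < q ∧ m < e ∧ v = q * e - m := by
  have := Nat.div_add_mod' (v + (e - 1)) e
  have := Nat.mod_lt (v + (e - 1)) he
  exact ⟨(v + (e - 1)) / e, (v + (e - 1)) / e * e - v, Nat.div_pos (by omega) he, by omega,
    by omega⟩

namespace List

theorem sum_take_add_one_eq_add_getD (L : List ℕ) (a : ℕ) :
    (L.take (a + 1)).sum = (L.take a).sum + L.getD a 0 := by
  rcases lt_or_ge a L.length with h | h
  · rw [sum_take_succ L a h, getD_eq_getElem _ _ h]
  · rw [take_of_length_le h, take_of_length_le (by omega), getD_eq_default _ _ h, add_zero]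

theorem le_sum_take {L : List ℕ} (hpos : ∀ x ∈ L, 0 < x) {a : ℕ} (ha : a ≤ L.length) :
    a ≤ (L.take a).sum := by
  simpa [length_take, ha] using
    length_le_sum_of_one_le (L.take a) fun x hx => hpos x (mem_of_mem_take hx)

theorem antitone_getD_of_pairwise_ge {L : List ℕ} (hsort : L.Pairwise (· ≥ ·)) :
    Antitone fun i => L.getD i 0 := by
  intro i j hij
  show L.getD j 0 ≤ L.getD i 0
  rcases lt_or_ge j L.length with hj | hj
  · rw [getD_eq_getElem _ _ hj, getD_eq_getElem _ _ (hij.trans_lt hj)]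
    exact (sortedGE_iff_pairwise.2 hsort).getElem_ge_getElem_of_le hij
  · rw [getD_eq_default _ _ hj]
    exact Nat.zero_le _

end List

open List

/-- `r` is an entry of row `a` (counted from `0`) of the row-reading tableau of `L`. -/
def MemRow (L : List ℕ) (a r : ℕ) : Prop :=
  (L.take a).sum < r ∧ r ≤ (L.take (a + 1)).sum

section MemRow

variable {L : List ℕ} {a b r : ℕ}

theorem MemRow.lt_length (hr : MemRow L a r) : a < L.length := by
  by_contra! h
  have h1 := hr.1
  have h2 := hr.2
  rw [take_of_length_le h] at h1
  rw [take_of_length_le (by omega)] at h2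
  omega

theorem MemRow.le_sum (hr : MemRow L a r) : r ≤ L.sum := by
  simpa using hr.2.trans (monotone_sum_take L (show a + 1 ≤ L.length from hr.lt_length))

theorem MemRow.sum_take_lt_iff (hr : MemRow L a r) : (L.take b).sum < r ↔ b ≤ a :=
  ⟨fun hb => le_of_not_gt fun h => (hr.2.trans (monotone_sum_take L h)).not_gt hb,
    fun hb => (monotone_sum_take L hb).trans_lt hr.1⟩

theorem MemRow.unique (ha : MemRow L a r) (hb : MemRow L b r) : a = b :=
  le_antisymm (hb.sum_take_lt_iff.1 ha.1) (ha.sum_take_lt_iff.1 hb.1)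

theorem exists_memRow (hr0 : 0 < r) (hr : r ≤ L.sum) : ∃ a, MemRow L a r := by
  have hex : ∃ n, r ≤ (L.take n).sum := ⟨L.length, by rwa [take_length]⟩
  obtain ⟨a, ha⟩ : ∃ a, Nat.find hex = a + 1 :=
    Nat.exists_eq_succ_of_ne_zero fun h0 => by simpa [h0, hr0.ne'] using Nat.find_spec hex
  exact ⟨a, not_le.1 (Nat.find_min hex (by omega)), ha ▸ Nat.find_spec hex⟩

theorem memRow_sum_take_add_one (hpos : ∀ x ∈ L, 0 < x) (ha : a < L.length) :
    MemRow L a ((L.take a).sum + 1) :=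
  ⟨lt_add_one _, by rw [sum_take_succ L a ha]; exact Nat.add_le_add_left (hpos _ (getElem_mem ha)) _⟩

theorem resTrow_of_memRow (e : ℕ) (hr : MemRow L a r) :
    resTrow e L r = ((r - (L.take a).sum : ℕ) : ZMod e) - 1 - a := by
  have hrow : (Finset.range L.length).filter (fun b => (L.take b).sum < r) =
      Finset.range (a + 1) := by
    ext b
    have := hr.lt_length
    simp only [Finset.mem_filter, Finset.mem_range, hr.sum_take_lt_iff]
    omega
  simp only [resTrow, hrow, Finset.card_range, Nat.add_sub_cancel]

end MemRow

section Hook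

variable {e k : ℕ} {L : List ℕ} {a r : ℕ}

theorem mem_legEntries_iff_of_memRow (hpos : ∀ x ∈ L, 0 < x) (hk : k < L.length)
    (hr : MemRow L a r) : r ∈ legEntries L k ↔ 1 ≤ a ∧ a ≤ k ∧ (L.take a).sum + 1 = r := by
  simp only [legEntries, Finset.mem_image, Finset.mem_Icc]
  constructor
  · rintro ⟨b, ⟨hb1, hbk⟩, rfl⟩
    obtain rfl := (memRow_sum_take_add_one hpos (by omega)).unique hr
    exact ⟨hb1, hbk, rfl⟩
  · exact fun ⟨ha1, hak, h⟩ => ⟨a, ⟨ha1, hak⟩, h⟩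

theorem resHook_sum_take_add_one (hpos : ∀ x ∈ L, 0 < x) (hk : k < L.length) (ha1 : 1 ≤ a)
    (hak : a ≤ k) : resHook e L k ((L.take a).sum + 1) = -(a : ZMod e) := by
  have hfilter : (Finset.Icc 1 k).filter (fun b => (L.take b).sum + 1 ≤ (L.take a).sum + 1) =
      Finset.Icc 1 a := by
    ext b
    simp only [Finset.mem_filter, Finset.mem_Icc, Nat.add_one_le_iff,
      (memRow_sum_take_add_one hpos (show a < L.length by omega)).sum_take_lt_iff]
    omega
  rw [resHook, if_pos (show _ ∈ legEntries L k from
    Finset.mem_image_of_mem _ (Finset.mem_Icc.2 ⟨ha1, hak⟩)), hfilter,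
    Nat.card_Icc, Nat.add_sub_cancel]

theorem card_filter_legEntries_lt (hpos : ∀ x ∈ L, 0 < x) (hk : k < L.length)
    (hr : MemRow L a r) (hak : a ≤ k) (hnot : r ∉ legEntries L k) :
    ((legEntries L k).filter fun x => x < r).card = a := by
  have hfilter : (Finset.Icc 1 k).filter (fun b => (L.take b).sum + 1 < r) = Finset.Icc 1 a := by
    ext b
    simp only [Finset.mem_filter, Finset.mem_Icc]
    constructor
    · exact fun ⟨⟨hb1, _⟩, hlt⟩ => ⟨hb1, hr.sum_take_lt_iff.1 (by omega)⟩
    · rintro ⟨hb1, hba⟩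
      refine ⟨⟨hb1, hba.trans hak⟩, lt_of_le_of_ne ?_ fun h => hnot ?_⟩
      · exact (Nat.add_le_add_right (monotone_sum_take L hba) 1).trans hr.1
      · exact Finset.mem_image.2 ⟨b, Finset.mem_Icc.2 ⟨hb1, hba.trans hak⟩, h⟩
  simp only [legEntries, Finset.filter_image]
  rw [hfilter, Finset.card_image_of_injOn, Nat.card_Icc, Nat.add_sub_cancel]
  intro x hx y hy hxy
  simp only [Finset.coe_Icc, Set.mem_Icc, add_left_inj] at hx hy hxy
  exact (memRow_sum_take_add_one hpos (by omega)).unique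
    (hxy ▸ memRow_sum_take_add_one hpos (by omega))

theorem resHook_eq_resTrow_iff_of_not_mem_legEntries (hpos : ∀ x ∈ L, 0 < x)
    (hk : k < L.length) (hr : MemRow L a r) (hak : a ≤ k) (hnot : r ∉ legEntries L k) :
    resHook e L k r = resTrow e L r ↔ e ∣ (L.take a).sum := by
  have har : 1 + a ≤ r := by
    have := le_sum_take hpos (a := a) (by omega); have := hr.1; omega
  rw [resHook, if_neg hnot, card_filter_legEntries_lt hpos hk hr hak hnot, resTrow_of_memRow e hr,
    Nat.sub_sub, Nat.cast_sub har, Nat.cast_sub hr.1.le, ← ZMod.natCast_eq_zero_iff]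
  simp only [Nat.cast_add, Nat.cast_one]
  rw [show (r : ZMod e) - (L.take a).sum - 1 - a = r - (1 + a) - (L.take a).sum by ring, eq_comm,
    sub_eq_self]

end Hook

def LongRowsAligned (e : ℕ) (L : List ℕ) : Prop :=
  ∀ a, 2 ≤ L.getD a 0 → e ∣ (L.take a).sum

theorem forall_resHook_eq_resTrow_iff {e k : ℕ} {L : List ℕ} (hlen : L.length = k + 1)
    (hpos : ∀ x ∈ L, 0 < x) :
    (∀ r, 1 ≤ r → r ≤ L.sum → resHook e L k r = resTrow e L r) ↔ LongRowsAligned e L := by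
  have hk : k < L.length := by omega
  constructor
  · intro H a ha
    have haL : a < L.length := by
      by_contra h
      rw [getD_eq_default _ _ (not_lt.1 h)] at ha
      omega
    have hr : MemRow L a ((L.take a).sum + 2) :=
      ⟨by omega, by rw [sum_take_add_one_eq_add_getD]; omega⟩
    have hnot : (L.take a).sum + 2 ∉ legEntries L k := by
      rw [mem_legEntries_iff_of_memRow hpos hk hr]; omega
    exact (resHook_eq_resTrow_iff_of_not_mem_legEntries hpos hk hr (by omega) hnot).1
      (H _ (by omega) hr.le_sum)
  · intro H r hr0 hrd
    obtain ⟨a, hr⟩ := exists_memRow hr0 hrd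
    have hak : a ≤ k := by have := hr.lt_length; omega
    by_cases hleg : r ∈ legEntries L k
    · obtain ⟨ha1, -, rfl⟩ := (mem_legEntries_iff_of_memRow hpos hk hr).1 hleg
      rw [resHook_sum_take_add_one hpos hk ha1 hak, resTrow_of_memRow e hr, add_tsub_cancel_left]
      simp
    · rw [resHook_eq_resTrow_iff_of_not_mem_legEntries hpos hk hr hak hleg]
      rcases Nat.eq_zero_or_pos a with rfl | ha1
      · simp
      · apply H
        have hrow := hr.2
        rw [sum_take_add_one_eq_add_getD] at hrow
        have hne : (L.take a).sum + 1 ≠ r := fun h =>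
          hleg ((mem_legEntries_iff_of_memRow hpos hk hr).2 ⟨ha1, hak, h⟩)
        have := hr.1
        omega

/-- The partition `(a_1 e, ..., a_{c-1} e, a_c e - m, 1^{k-c+1})`, with `a` indexed from `0`. -/
def hookMatchShape (e k c : ℕ) (a : ℕ → ℕ) (m : ℕ) : List ℕ :=
  List.ofFn fun x : Fin (k + 1) =>
    if (x : ℕ) + 1 < c then a (x : ℕ) * e
    else if (x : ℕ) + 1 = c then a (x : ℕ) * e - m
    else 1

theorem longRowsAligned_hookMatchShape (e k c : ℕ) (a : ℕ → ℕ) (m : ℕ) :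
    LongRowsAligned e (hookMatchShape e k c a m) := by
  intro b hb
  have hget : ∀ x, x < k + 1 → (hookMatchShape e k c a m).getD x 0 =
      if x + 1 < c then a x * e else if x + 1 = c then a x * e - m else 1 := fun x hx => by
    rw [getD_eq_getElem _ _ (by simpa [hookMatchShape] using hx)]
    simp only [hookMatchShape, List.getElem_ofFn]
  have hbk : b < k + 1 := by
    by_contra h
    rw [getD_eq_default _ _ (by simp only [hookMatchShape, length_ofFn]; omega)] at hb
    omega
  have hbc : b < c := by
    rw [hget b hbk] at hb
    split_ifs at hb <;> omega
  refine dvd_sum fun y hy => ?_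
  obtain ⟨x, hx, rfl⟩ := mem_take_iff_getElem.1 hy
  rw [← getD_eq_getElem _ 0, hget x (by simp only [hookMatchShape, length_ofFn] at hx; omega), if_pos (by omega)]
  exact dvd_mul_left e (a x)

theorem exists_hookMatchShape_of_longRowsAligned {e k : ℕ} {L : List ℕ} (he : 0 < e)
    (hlen : L.length = k + 1) (hpos : ∀ x ∈ L, 0 < x) (hsort : L.Pairwise (· ≥ ·))
    (h : LongRowsAligned e L) :
    ∃ c, 1 ≤ c ∧ c ≤ k + 1 ∧ ∃ a : ℕ → ℕ, ∃ m, m < e ∧ (∀ x, x < c → 0 < a x) ∧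
      L = hookMatchShape e k c a m := by
  have hposD : ∀ x, x < k + 1 → 0 < L.getD x 0 := fun x hx => by
    rw [getD_eq_getElem _ _ (by omega)]; exact hpos _ (getElem_mem _)
  have hex : ∃ t, L.getD t 0 < 2 := ⟨L.length, by simp⟩
  set t := Nat.find hex
  have hlong : ∀ x < t, 2 ≤ L.getD x 0 := fun x hx => not_lt.1 (Nat.find_min hex hx)
  have hshort : ∀ x, t ≤ x → L.getD x 0 < 2 := fun x hx =>
    (antitone_getD_of_pairwise_ge hsort hx).trans_lt (Nat.find_spec hex)
  have ht : t ≤ k + 1 := Nat.find_min' hex (by simp [hlen])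
  have hdvd : ∀ x, x + 1 < t → e ∣ L.getD x 0 := fun x hx => by
    have := h (x + 1) (hlong _ hx)
    rw [sum_take_add_one_eq_add_getD] at this
    exact (Nat.dvd_add_right (h x (hlong x (by omega)))).1 this
  set c := max t 1
  obtain ⟨q, m, hq, hm, hv⟩ := Nat.exists_eq_mul_sub_of_pos he (hposD (c - 1) (by omega))
  refine ⟨c, le_max_right _ _, by omega, fun x => if x + 1 < c then L.getD x 0 / e else q, m, hm,
    fun x _ => ?_, ?_⟩
  · dsimp only
    split_ifs with hxc
    · have hx2 := hlong x (by omega)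
      exact Nat.div_pos (Nat.le_of_dvd (by omega) (hdvd x (by omega))) he
    · exact hq
  · refine ext_getElem (by simp [hookMatchShape, hlen]) fun x hx _ => ?_
    simp only [hookMatchShape, List.getElem_ofFn, ← getD_eq_getElem _ 0 hx]
    split_ifs with h1 h2
    · exact (Nat.div_mul_cancel (hdvd x (by omega))).symm
    · rwa [show x = c - 1 by omega]
    · have := hshort x (by omega); have := hposD x (by omega); omega

/-- Lemma 5.5(i): for a partition `μ` with exactly `k+1` parts, the residue
sequence of `T^λ_μ` equals the residue sequence `i^μ` of `T^μ` iff
`μ = (a_1 e, ..., a_{c-1} e, a_c e - m, 1^{k-c+1})` for some `1 ≤ c ≤ k+1`,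
positive integers `a_1, ..., a_c`, and `0 ≤ m < e`. -/
theorem residue_match_hook_case_one_row_count (e d k : ℕ) (he : 3 ≤ e) (L : List ℕ)
    (hlen : L.length = k + 1) (hpos : ∀ x ∈ L, 0 < x)
    (hsort : L.Pairwise (· ≥ ·)) (hd : L.sum = d) :
    (∀ r, 1 ≤ r → r ≤ d → resHook e L k r = resTrow e L r) ↔
    (∃ c, 1 ≤ c ∧ c ≤ k + 1 ∧ ∃ a : ℕ → ℕ, ∃ m, m < e ∧ (∀ x, x < c → 0 < a x) ∧
      L = List.ofFn fun x : Fin (k + 1) =>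
        if (x : ℕ) + 1 < c then a (x : ℕ) * e
        else if (x : ℕ) + 1 = c then a (x : ℕ) * e - m
        else 1) := by
  subst hd
  rw [forall_resHook_eq_resTrow_iff hlen hpos]
  exact ⟨exists_hookMatchShape_of_longRowsAligned (by omega) hlen hpos hsort,
    fun ⟨c, _, _, a, m, _, _, hL⟩ => hL ▸ longRowsAligned_hookMatchShape e k c a m⟩
end
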